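/- Let (M,ρ) be a complete metric space, let f : M → ℝ ∪ {+∞} be proper, lower semicontinuous and bounded below, and let g : M → ℝ be continuous with |∇̃f|(x) ≥ |∇̃g|(x) for every x ∈ dom f with |∇̃f|(x) < ∞. Then for each ε > 0, each x₀ ∈ M and each r ∈ (0,1) there exists x ∈ ε-Crit f such that f(x) ≤ f(x₀) - ε·ρ(x, x₀) and f(x₀) - r·g(x₀) ≥ f(x) - r·g(x). -/

import Mathlib

/-!
Ekeland's principle, run on the closed sublevel set `{f - θ G ≤ (f - θ G) x₀}`, yields a point
`x` that is minimal for the order `z ≼ x ↔ f z + ε ρ(z, x) ≤ f x ∧ (f - θ G) z ≤ (f - θ G) x`.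
At such a point `|∇̃f|(x) ≤ max ε (θ L)` whenever `G` drops by at most `L ρ(x, ·)` from `x`.
For Lipschitz `G` this makes `|∇̃f|(x)` finite, so `|∇̃G| ≤ |∇̃f|` turns the bound into
`|∇̃f|(x) ≤ max ε (θ |∇̃f|(x))`, i.e. `x` is `ε`-critical because `θ < 1`.

A continuous `g` is replaced by its Lipschitz envelope `⨅ y, g y + N ρ(·, y)`: it lies below `g`,
its global slope is at most that of `g`, and it is within `η` of `g` at `x₀` once `N` is large.
It is finite because `g` lies above a cone of slope `ε` at any `ε`-critical point. Choosing
`r < θ < 1`, the error `θ η` is absorbed since, when `x₀` is not `ε`-critical, the decrease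
`f x₀ - f x` is at least half the amount by which `x₀` fails to be `ε`-critical.
-/

open Filter Topology ENNReal

/-- The positive part `[x]⁺` of an extended real, as an element of `ℝ≥0∞`. -/
noncomputable def erealPos (x : EReal) : ℝ≥0∞ := if x = ⊤ then ⊤ else ENNReal.ofReal x.toReal

/-- The global slope `|∇̃ f|(x) = sup_{y ≠ x} [f x - f y]⁺ / ρ(x,y)` of `f : M → ℝ ∪ {+∞}`. -/
noncomputable def globalSlope {M : Type*} [MetricSpace M] (f : M → EReal) (x : M) : ℝ≥0∞ :=
  ⨆ y ∈ {y : M | y ≠ x}, erealPos (f x - f y) / edist x y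

/-- The local slope `|∇ f|(x) = limsup_{y → x, y ≠ x} [f x - f y]⁺ / ρ(x,y)`. -/
noncomputable def localSlope {M : Type*} [MetricSpace M] (f : M → EReal) (x : M) : ℝ≥0∞ :=
  Filter.limsup (fun y => erealPos (f x - f y) / edist x y) (𝓝[≠] x)

/-- `ε`-global-critical points: `x ∈ dom f` with `f y ≥ f x - ε·ρ(y,x)` for all `y`. -/
def epsCrit {M : Type*} [MetricSpace M] (ε : ℝ) (f : M → EReal) : Set M :=
  {x | f x ≠ ⊤ ∧ ∀ y, f x - ↑(ε * dist y x) ≤ f y}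

open Set Metric
open scoped NNReal

section Slope

variable {M : Type*} [MetricSpace M]

lemma erealPos_le_ofReal_iff {t : EReal} {a : ℝ} (ha : 0 ≤ a) :
    erealPos t ≤ ENNReal.ofReal a ↔ t ≤ a := by
  unfold erealPos
  induction t with
  | bot => simp
  | coe t => simp [ENNReal.ofReal_le_ofReal_iff ha]
  | top => simp

lemma globalSlope_le_ofReal_iff {f : M → EReal} {x : M} {L : ℝ} (hL : 0 ≤ L) :
    globalSlope f x ≤ ENNReal.ofReal L ↔ ∀ y, f x - f y ≤ ↑(L * dist x y) := by
  simp only [globalSlope, iSup₂_le_iff, mem_ofPred_eq]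
  refine forall_congr' fun y => ?_
  rcases eq_or_ne y x with rfl | hy
  · simpa using EReal.sub_self_le_zero
  · have hd : 0 < dist x y := dist_pos.2 hy.symm
    rw [edist_dist, ENNReal.div_le_iff (by simpa using hd) ENNReal.ofReal_ne_top,
      ← ENNReal.ofReal_mul hL, erealPos_le_ofReal_iff (by positivity)]
    simp [hy]

lemma globalSlope_coe_le_ofReal_iff {g : M → ℝ} {x : M} {L : ℝ} (hL : 0 ≤ L) :
    globalSlope (fun y => (g y : EReal)) x ≤ ENNReal.ofReal L ↔
      ∀ y, g x - g y ≤ L * dist x y := by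
  simp only [globalSlope_le_ofReal_iff hL, ← EReal.coe_sub, EReal.coe_le_coe_iff]

lemma LipschitzWith.globalSlope_le {G : M → ℝ} {K : ℝ≥0} (hG : LipschitzWith K G) (x : M) :
    globalSlope (fun y => (G y : EReal)) x ≤ K := by
  rw [← ENNReal.ofReal_coe_nnreal]
  exact (globalSlope_coe_le_ofReal_iff K.2).2 fun y => (le_abs_self _).trans (hG.dist_le_mul x y)

lemma mem_epsCrit_iff {f : M → EReal} {ε : ℝ} (hε : 0 ≤ ε) {x : M} :
    x ∈ epsCrit ε f ↔ f x ≠ ⊤ ∧ globalSlope f x ≤ ENNReal.ofReal ε := by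
  rw [globalSlope_le_ofReal_iff hε, epsCrit, mem_ofPred_eq]
  refine and_congr_right fun _ => forall_congr' fun y => ?_
  rw [EReal.sub_le_iff_le_add (.inl (EReal.coe_ne_bot _)) (.inl (EReal.coe_ne_top _)),
    EReal.sub_le_iff_le_add (.inr (EReal.coe_ne_top _)) (.inr (EReal.coe_ne_bot _)),
    add_comm, dist_comm]

end Slope

lemma LowerSemicontinuous.add_coe {X : Type*} [TopologicalSpace X] {φ : X → EReal}
    (hφ : LowerSemicontinuous φ) {h : X → ℝ} (hh : Continuous h) :
    LowerSemicontinuous fun x => φ x + h x :=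
  hφ.add' (continuous_coe_real_ereal.comp hh).lowerSemicontinuous fun _ =>
    EReal.continuousAt_add (.inr (EReal.coe_ne_bot _)) (.inr (EReal.coe_ne_top _))

section Ekeland

variable {X : Type*} [MetricSpace X] {φ : X → EReal} {ε : ℝ} {s : Set X} {x y z : X}

def ekelandSet (φ : X → EReal) (ε : ℝ) (x : X) : Set X :=
  {z | φ z + ↑(ε * dist z x) ≤ φ x}

lemma self_mem_ekelandSet : x ∈ ekelandSet φ ε x := by
  simp [ekelandSet]

lemma ekelandSet_trans (hε : 0 ≤ ε) (hz : z ∈ ekelandSet φ ε y) (hy : y ∈ ekelandSet φ ε x) :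
    z ∈ ekelandSet φ ε x :=
  calc φ z + ↑(ε * dist z x) ≤ φ z + ↑(ε * dist z y) + ↑(ε * dist y x) := by
        rw [add_assoc, ← EReal.coe_add, ← mul_add]
        gcongr
        exact dist_triangle z y x
    _ ≤ φ y + ↑(ε * dist y x) := by gcongr; exact hz
    _ ≤ φ x := hy

lemma ne_top_of_mem_ekelandSet (hx : φ x ≠ ⊤) (hy : y ∈ ekelandSet φ ε x) : φ y ≠ ⊤ := by
  rintro hy'
  rw [ekelandSet, mem_ofPred_eq, hy', EReal.top_add_of_ne_bot (EReal.coe_ne_bot _),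
    top_le_iff] at hy
  exact hx hy

lemma isClosed_ekelandSet (hφ : LowerSemicontinuous φ) (x : X) : IsClosed (ekelandSet φ ε x) :=
  (hφ.add_coe ((continuous_id.dist continuous_const).const_mul ε)).isClosed_preimage (φ x)

lemma exists_mem_ekelandSet_subset_closedBall {C : ℝ} (hC : ∀ x, (C : EReal) ≤ φ x)
    (hε : 0 < ε) (hx : φ x ≠ ⊤) (hxs : x ∈ s) {δ : ℝ} (hδ : 0 < δ) :
    ∃ y ∈ s ∩ ekelandSet φ ε x, s ∩ ekelandSet φ ε y ⊆ closedBall y δ := by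
  have hCm : (C : EReal) ≤ ⨅ z ∈ s ∩ ekelandSet φ ε x, φ z := le_iInf₂ fun z _ => hC z
  have hmx : ⨅ z ∈ s ∩ ekelandSet φ ε x, φ z ≤ φ x := iInf₂_le x ⟨hxs, self_mem_ekelandSet⟩
  obtain ⟨m, hm⟩ : ∃ m : ℝ, (m : EReal) = ⨅ z ∈ s ∩ ekelandSet φ ε x, φ z :=
    ⟨_, EReal.coe_toReal (hmx.trans_lt hx.lt_top).ne
      (ne_bot_of_le_ne_bot (EReal.coe_ne_bot C) hCm)⟩
  obtain ⟨y, hy, hym⟩ : ∃ y ∈ s ∩ ekelandSet φ ε x, φ y < ↑(m + ε * δ) := by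
    have : (m : EReal) < ↑(m + ε * δ) := by
      exact_mod_cast lt_add_of_pos_right m (mul_pos hε hδ)
    simpa only [hm, iInf_lt_iff, exists_prop] using this
  refine ⟨y, hy, fun z hz => ?_⟩
  have hmz : (m : EReal) ≤ φ z := hm ▸ iInf₂_le z ⟨hz.1, ekelandSet_trans hε.le hz.2 hy.2⟩
  have hzy : φ z + ↑(ε * dist z y) < ↑(m + ε * δ) := hz.2.trans_lt hym
  lift φ z to ℝ using
    ⟨ne_top_of_mem_ekelandSet hym.ne_top hz.2, ne_bot_of_le_ne_bot (EReal.coe_ne_bot m) hmz⟩ with a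
  have hzy' : a + ε * dist z y < m + ε * δ := by exact_mod_cast hzy
  have hmz' : m ≤ a := by exact_mod_cast hmz
  exact (lt_of_mul_lt_mul_left (by linarith) hε.le).le

lemma exists_seq_mem_ekelandSet {C : ℝ} (hC : ∀ x, (C : EReal) ≤ φ x) (hε : 0 < ε)
    {x₀ : X} (hx₀ : φ x₀ ≠ ⊤) (hx₀s : x₀ ∈ s) :
    ∃ u : ℕ → X, u 0 = x₀ ∧ ∀ n, u (n + 1) ∈ s ∩ ekelandSet φ ε (u n) ∧
      s ∩ ekelandSet φ ε (u (n + 1)) ⊆ closedBall (u (n + 1)) (1 / (n + 1)) := by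
  have step (n : ℕ) (x : {x // φ x ≠ ⊤ ∧ x ∈ s}) : ∃ y : {x // φ x ≠ ⊤ ∧ x ∈ s},
      y.1 ∈ s ∩ ekelandSet φ ε x ∧ s ∩ ekelandSet φ ε y ⊆ closedBall y (1 / (n + 1)) := by
    obtain ⟨y, hy, hball⟩ := exists_mem_ekelandSet_subset_closedBall hC hε x.2.1 x.2.2
      (Nat.one_div_pos_of_nat (n := n))
    exact ⟨⟨y, ne_top_of_mem_ekelandSet x.2.1 hy.2, hy.1⟩, hy, hball⟩
  choose next hnext using step
  let u : ℕ → {x // φ x ≠ ⊤ ∧ x ∈ s} := fun n => Nat.rec ⟨x₀, hx₀, hx₀s⟩ next n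
  have hu (n : ℕ) : u (n + 1) = next n (u n) := rfl
  refine ⟨fun n => (u n).1, rfl, fun n => ?_⟩
  simp only [hu]
  exact hnext n (u n)

theorem exists_minimal_ekelandSet [CompleteSpace X] (hφ : LowerSemicontinuous φ) {C : ℝ}
    (hC : ∀ x, (C : EReal) ≤ φ x) (hε : 0 < ε) (hs : IsClosed s) {x₀ : X} (hx₀ : φ x₀ ≠ ⊤)
    (hx₀s : x₀ ∈ s) :
    ∃ x ∈ s ∩ ekelandSet φ ε x₀, ∀ z ∈ s ∩ ekelandSet φ ε x, z = x := by
  obtain ⟨u, rfl, hu⟩ := exists_seq_mem_ekelandSet hC hε hx₀ hx₀s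
  choose hu hball using hu
  set T : ℕ → Set X := fun n => s ∩ ekelandSet φ ε (u (n + 1))
  have hT : Antitone T := antitone_nat_of_succ_le fun n z hz =>
    ⟨hz.1, ekelandSet_trans hε.le hz.2 (hu (n + 1)).2⟩
  have hbdd (n : ℕ) : Bornology.IsBounded (T n) := isBounded_closedBall.subset (hball n)
  have hdiam : Tendsto (fun n => diam (T n)) atTop (𝓝 0) := by
    refine squeeze_zero (fun n => diam_nonneg) (fun n => diam_le_of_subset_closedBall
      Nat.one_div_pos_of_nat.le (hball n)) ?_
    simpa using tendsto_one_div_add_atTop_nhds_zero_nat.const_mul (2 : ℝ)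
  obtain ⟨x, hx⟩ := nonempty_iInter_of_nonempty_biInter
    (fun n => hs.inter (isClosed_ekelandSet hφ _)) hbdd
    (fun N => ⟨u (N + 1), mem_iInter₂.2 fun n hn => hT hn ⟨(hu N).1, self_mem_ekelandSet⟩⟩)
    hdiam
  rw [mem_iInter] at hx
  refine ⟨x, ⟨(hx 0).1, ekelandSet_trans hε.le (hx 0).2 (hu 0).2⟩, fun z hz => ?_⟩
  have hzT (n : ℕ) : z ∈ T n := ⟨hz.1, ekelandSet_trans hε.le hz.2 (hx n).2⟩
  exact dist_le_zero.1 (ge_of_tendsto' hdiam fun n => dist_le_diam_of_mem (hbdd n) (hzT n) (hx n))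

end Ekeland

section MinimalPoint

variable {M : Type*} [MetricSpace M] {f : M → EReal} {G : M → ℝ} {ε θ : ℝ} {x : M}

lemma globalSlope_le_of_minimal (hbot : ∀ y, f y ≠ ⊥) (hε : 0 ≤ ε) (hθ : 0 ≤ θ) {Λ : ℝ}
    (hx : f x ≠ ⊤)
    (hmin : ∀ z ∈ ekelandSet f ε x, f z - ↑(θ * G z) ≤ f x - ↑(θ * G x) → z = x)
    (hG : ∀ y, G x - G y ≤ Λ * dist x y) :
    globalSlope f x ≤ ENNReal.ofReal (max ε (θ * Λ)) := by
  rw [globalSlope_le_ofReal_iff (hε.trans (le_max_left _ _))]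
  intro y
  rcases eq_or_ne y x with rfl | hyx
  · simpa using EReal.sub_self_le_zero
  obtain hyT | hyT := eq_or_ne (f y) ⊤
  · simp [hyT]
  lift f x to ℝ using ⟨hx, hbot x⟩ with a ha
  lift f y to ℝ using ⟨hyT, hbot y⟩ with b hb
  have hmin' (h₁ : b + ε * dist y x ≤ a) : a - θ * G x < b - θ * G y := lt_of_not_ge fun h₂ =>
    hyx (hmin y (by rw [ekelandSet, mem_ofPred_eq, ← hb, ← ha]; exact_mod_cast h₁)
      (by rw [← hb]; exact_mod_cast h₂))
  rw [← EReal.coe_sub, EReal.coe_le_coe_iff]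
  by_cases hyS : b + ε * dist y x ≤ a
  · calc a - b ≤ θ * (G x - G y) := by linarith [hmin' hyS]
      _ ≤ θ * (Λ * dist x y) := mul_le_mul_of_nonneg_left (hG y) hθ
      _ ≤ max ε (θ * Λ) * dist x y := by
        rw [← mul_assoc]
        exact mul_le_mul_of_nonneg_right (le_max_right _ _) dist_nonneg
  · calc a - b ≤ ε * dist x y := by rw [dist_comm]; linarith
      _ ≤ max ε (θ * Λ) * dist x y := mul_le_mul_of_nonneg_right (le_max_left _ _) dist_nonneg

lemma mem_epsCrit_of_minimal (hbot : ∀ y, f y ≠ ⊥) (hε : 0 ≤ ε) (hθ₀ : 0 ≤ θ) (hθ₁ : θ < 1)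
    {K : ℝ≥0} (hG : LipschitzWith K G)
    (hslope : ∀ x, f x ≠ ⊤ → globalSlope f x < ⊤ →
      globalSlope (fun y => (G y : EReal)) x ≤ globalSlope f x)
    (hx : f x ≠ ⊤)
    (hmin : ∀ z ∈ ekelandSet f ε x, f z - ↑(θ * G z) ≤ f x - ↑(θ * G x) → z = x) :
    x ∈ epsCrit ε f := by
  have hfin : globalSlope f x ≠ ⊤ := ne_top_of_le_ne_top ENNReal.ofReal_ne_top <|
    globalSlope_le_of_minimal hbot hε hθ₀ hx hmin fun y =>
      (le_abs_self _).trans (hG.dist_le_mul x y)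
  set Λ := (globalSlope f x).toReal
  have hΛ : globalSlope f x = ENNReal.ofReal Λ := (ENNReal.ofReal_toReal hfin).symm
  have hGΛ : ∀ y, G x - G y ≤ Λ * dist x y :=
    (globalSlope_coe_le_ofReal_iff ENNReal.toReal_nonneg).1 (hΛ ▸ hslope x hx hfin.lt_top)
  have hΛε : Λ ≤ max ε (θ * Λ) :=
    (ENNReal.ofReal_le_ofReal_iff (hε.trans (le_max_left _ _))).1 <|
      hΛ ▸ globalSlope_le_of_minimal hbot hε hθ₀ hx hmin hGΛ
  refine (mem_epsCrit_iff hε).2 ⟨hx, hΛ ▸ ENNReal.ofReal_le_ofReal ?_⟩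
  rcases le_max_iff.1 hΛε with h | h
  · exact h
  · nlinarith [ENNReal.toReal_nonneg (a := globalSlope f x)]

theorem exists_mem_epsCrit_of_lipschitzWith [CompleteSpace M] (hf : LowerSemicontinuous f)
    {C : ℝ} (hC : ∀ x, (C : EReal) ≤ f x) (hε : 0 < ε) (hθ₀ : 0 ≤ θ) (hθ₁ : θ < 1)
    {K : ℝ≥0} (hG : LipschitzWith K G)
    (hslope : ∀ x, f x ≠ ⊤ → globalSlope f x < ⊤ →
      globalSlope (fun y => (G y : EReal)) x ≤ globalSlope f x)
    {x₀ : M} (hx₀ : f x₀ ≠ ⊤) :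
    ∃ x ∈ epsCrit ε f,
      f x ≤ f x₀ - ↑(ε * dist x x₀) ∧ f x - ↑(θ * G x) ≤ f x₀ - ↑(θ * G x₀) := by
  set ψ : M → EReal := fun z => f z - ↑(θ * G z)
  have hψ : LowerSemicontinuous ψ := by
    simpa [ψ, sub_eq_add_neg] using hf.add_coe (hG.continuous.const_mul θ).neg
  obtain ⟨x, ⟨hxψ, hx⟩, hmin⟩ := exists_minimal_ekelandSet hf hC hε
    (hψ.isClosed_preimage (ψ x₀)) hx₀ (le_refl (ψ x₀))
  refine ⟨x, mem_epsCrit_of_minimal (fun y => ne_bot_of_le_ne_bot (EReal.coe_ne_bot C) (hC y))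
    hε.le hθ₀ hθ₁ hG hslope (ne_top_of_mem_ekelandSet hx₀ hx)
    (fun z hz hψz => hmin z ⟨hψz.trans hxψ, hz⟩), ?_, hxψ⟩
  exact (EReal.le_sub_iff_add_le (.inl (EReal.coe_ne_bot _)) (.inl (EReal.coe_ne_top _))).2 hx

theorem exists_mem_epsCrit [CompleteSpace M] (hf : LowerSemicontinuous f) {C : ℝ}
    (hC : ∀ x, (C : EReal) ≤ f x) (hε : 0 < ε) {x₀ : M} (hx₀ : f x₀ ≠ ⊤) :
    ∃ x, x ∈ epsCrit ε f := by
  obtain ⟨x, hx, -⟩ := exists_mem_epsCrit_of_lipschitzWith hf hC hε le_rfl zero_lt_one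
    (LipschitzWith.const (0 : ℝ)) (fun x _ _ => by simp [globalSlope, erealPos]) hx₀
  exact ⟨x, hx⟩

end MinimalPoint

section LipschitzEnvelope

variable {M : Type*} [MetricSpace M] {g : M → ℝ} {N : ℝ≥0}

/-- The Pasch–Hausdorff envelope, the largest `N`-Lipschitz minorant of `g`. The `⨅` is a junk
value unless the family is bounded below, whence the hypotheses `hb` below. -/
noncomputable def lipschitzEnvelope (g : M → ℝ) (N : ℝ≥0) (x : M) : ℝ :=
  ⨅ y, g y + N * dist x y

lemma bddBelow_range_add_mul_dist {c : M} {K : ℝ} (hK : 0 ≤ K) (hKN : K ≤ N)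
    (hcone : ∀ y, g c - K * dist c y ≤ g y) (x : M) :
    BddBelow (range fun y => g y + N * dist x y) := by
  refine ⟨g c - K * dist c x, forall_mem_range.2 fun y => ?_⟩
  have := dist_triangle c x y
  nlinarith [hcone y, dist_nonneg (x := x) (y := y)]

lemma lipschitzEnvelope_le (hb : ∀ x, BddBelow (range fun y => g y + N * dist x y)) (x : M) :
    lipschitzEnvelope g N x ≤ g x := by
  simpa [lipschitzEnvelope] using ciInf_le (hb x) x

lemma lipschitzEnvelope_sub_le (hb : ∀ x, BddBelow (range fun y => g y + N * dist x y))
    {L : ℝ} (hL : 0 ≤ L) (hLN : L ≤ N) {x : M}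
    (hgx : ∀ y, g x - g y ≤ L * dist x y) (z : M) :
    lipschitzEnvelope g N x - lipschitzEnvelope g N z ≤ L * dist x z := by
  have : Nonempty M := ⟨x⟩
  suffices lipschitzEnvelope g N x - L * dist x z ≤ lipschitzEnvelope g N z by linarith
  refine le_ciInf fun y => ?_
  have := dist_triangle x z y
  nlinarith [lipschitzEnvelope_le hb x, hgx y, dist_nonneg (x := z) (y := y)]

lemma lipschitzWith_lipschitzEnvelope
    (hb : ∀ x, BddBelow (range fun y => g y + N * dist x y)) :
    LipschitzWith N (lipschitzEnvelope g N) := by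
  refine LipschitzWith.of_le_add_mul N fun x z => ?_
  have : Nonempty M := ⟨x⟩
  suffices lipschitzEnvelope g N x - N * dist x z ≤ lipschitzEnvelope g N z by linarith
  refine le_ciInf fun y => ?_
  have hxy : lipschitzEnvelope g N x ≤ g y + N * dist x y := ciInf_le (hb x) y
  linarith [mul_le_mul_of_nonneg_left (dist_triangle x z y) N.coe_nonneg]

lemma globalSlope_lipschitzEnvelope_le
    (hb : ∀ x, BddBelow (range fun y => g y + N * dist x y)) (x : M) :
    globalSlope (fun y => (lipschitzEnvelope g N y : EReal)) x ≤
      globalSlope (fun y => (g y : EReal)) x := by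
  obtain hs | hs := eq_or_ne (globalSlope (fun y => (g y : EReal)) x) ⊤
  · exact hs ▸ le_top
  set L := (globalSlope (fun y => (g y : EReal)) x).toReal
  rw [← ENNReal.ofReal_toReal hs]
  rcases le_total L N with hLN | hNL
  · exact (globalSlope_coe_le_ofReal_iff ENNReal.toReal_nonneg).2 <|
      lipschitzEnvelope_sub_le hb ENNReal.toReal_nonneg hLN <|
        (globalSlope_coe_le_ofReal_iff ENNReal.toReal_nonneg).1 (ENNReal.ofReal_toReal hs).ge
  · refine ((lipschitzWith_lipschitzEnvelope hb).globalSlope_le x).trans ?_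
    simpa using ENNReal.ofReal_le_ofReal hNL

lemma sub_le_lipschitzEnvelope {c x : M} {K η δ : ℝ} (hK : 0 ≤ K)
    (hcone : ∀ y, g c - K * dist c y ≤ g y) (hδ : 0 < δ)
    (hgx : ∀ y, dist y x < δ → g x - η ≤ g y) (hη : 0 ≤ η)
    (hN : K + (g x - g c + K * dist c x) / δ ≤ N) :
    g x - η ≤ lipschitzEnvelope g N x := by
  have : Nonempty M := ⟨x⟩
  refine le_ciInf fun y => ?_
  rcases lt_or_ge (dist y x) δ with hyx | hyx
  · nlinarith [hgx y hyx, N.coe_nonneg, dist_nonneg (x := x) (y := y)]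
  · rw [← le_sub_iff_add_le', div_le_iff₀ hδ] at hN
    rw [dist_comm] at hyx
    have hNK : 0 ≤ (N : ℝ) - K := by
      nlinarith [hcone x]
    nlinarith [hcone y, mul_le_mul_of_nonneg_left (dist_triangle c x y) hK,
      mul_le_mul_of_nonneg_left hyx hNK]

theorem exists_lipschitzWith_le_globalSlope_le {c x₀ : M} {K η : ℝ} (hK : 0 ≤ K)
    (hcone : ∀ y, g c - K * dist c y ≤ g y) (hg : ContinuousAt g x₀) (hη : 0 < η) :
    ∃ N : ℝ≥0, ∃ G : M → ℝ, LipschitzWith N G ∧ (∀ x, G x ≤ g x) ∧ g x₀ - η ≤ G x₀ ∧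
      ∀ x, globalSlope (fun y => (G y : EReal)) x ≤ globalSlope (fun y => (g y : EReal)) x := by
  obtain ⟨δ, hδ, hgδ⟩ := Metric.continuousAt_iff.1 hg η hη
  set N := (K + (g x₀ - g c + K * dist c x₀) / δ).toNNReal
  have hN : K + (g x₀ - g c + K * dist c x₀) / δ ≤ N := Real.le_coe_toNNReal _
  have hKN : K ≤ N :=
    (le_add_of_nonneg_right (div_nonneg (by linarith [hcone x₀]) hδ.le)).trans hN
  have hb := bddBelow_range_add_mul_dist hK hKN hcone
  refine ⟨N, lipschitzEnvelope g N, lipschitzWith_lipschitzEnvelope hb, lipschitzEnvelope_le hb,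
    sub_le_lipschitzEnvelope hK hcone hδ (fun y hy => ?_) hη.le hN,
    globalSlope_lipschitzEnvelope_le hb⟩
  linarith [(abs_lt.1 (hgδ hy)).1]

end LipschitzEnvelope

section

variable {M : Type*} [MetricSpace M] {f : M → EReal} {g : M → ℝ} {ε : ℝ}

lemma mul_le_of_mul_le_add {r θ κ η u Δ : ℝ} (hr : 0 < r) (hrθ : r < θ) (hκ : κ ≤ 2 * Δ)
    (hu : θ * u ≤ Δ + θ * η) (hη : r * (θ * η) = (θ - r) * κ / 2) : r * u ≤ Δ := by
  refine le_of_mul_le_mul_left ?_ (hr.trans hrθ)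
  calc θ * (r * u) = r * (θ * u) := by ring
    _ ≤ r * Δ + (θ - r) * κ / 2 := by nlinarith [mul_le_mul_of_nonneg_left hu hr.le]
    _ ≤ r * Δ + (θ - r) * Δ := by nlinarith [sub_pos.2 hrθ]
    _ = θ * Δ := by ring

lemma sub_le_mul_dist_of_mem_epsCrit
    (hslope : ∀ x, f x ≠ ⊤ → globalSlope f x < ⊤ →
      globalSlope (fun y => (g y : EReal)) x ≤ globalSlope f x)
    (hε : 0 ≤ ε) {x : M} (hx : x ∈ epsCrit ε f) (y : M) : g x - g y ≤ ε * dist x y := by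
  obtain ⟨hxT, hfx⟩ := (mem_epsCrit_iff hε).1 hx
  exact (globalSlope_coe_le_ofReal_iff hε).1
    ((hslope x hxT (hfx.trans_lt ENNReal.ofReal_lt_top)).trans hfx) y

theorem exists_mem_epsCrit_of_not_mem_epsCrit [CompleteSpace M] (hf : LowerSemicontinuous f)
    {C : ℝ} (hC : ∀ x, (C : EReal) ≤ f x)
    (hslope : ∀ x, f x ≠ ⊤ → globalSlope f x < ⊤ →
      globalSlope (fun y => (g y : EReal)) x ≤ globalSlope f x)
    (hε : 0 < ε) {x₀ : M} (hg : ContinuousAt g x₀) (hx₀ : f x₀ ≠ ⊤) (hx₀ε : x₀ ∉ epsCrit ε f)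
    {r : ℝ} (hr₀ : 0 < r) (hr₁ : r < 1) :
    ∃ x ∈ epsCrit ε f,
      f x ≤ f x₀ - ↑(ε * dist x x₀) ∧ f x - ↑(r * g x) ≤ f x₀ - ↑(r * g x₀) := by
  have hbot (x : M) : f x ≠ ⊥ := ne_bot_of_le_ne_bot (EReal.coe_ne_bot C) (hC x)
  obtain ⟨c, hc⟩ := exists_mem_epsCrit hf hC hε hx₀
  obtain ⟨w, hw⟩ : ∃ w, f w < f x₀ - ↑(ε * dist w x₀) := by
    simpa [epsCrit, hx₀] using hx₀ε
  obtain ⟨a₀, ha₀⟩ : ∃ a : ℝ, f x₀ = a := ⟨_, (EReal.coe_toReal hx₀ (hbot x₀)).symm⟩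
  obtain ⟨b, hb⟩ : ∃ b : ℝ, f w = b := ⟨_, (EReal.coe_toReal hw.ne_top (hbot w)).symm⟩
  set κ := a₀ - ε * dist w x₀ - b with hκ_def
  have hκ : 0 < κ := by
    rw [ha₀, hb] at hw
    have : b < a₀ - ε * dist w x₀ := by exact_mod_cast hw
    linarith
  obtain ⟨θ, hrθ, hθ₁⟩ := exists_between hr₁
  have hθ₀ : 0 < θ := hr₀.trans hrθ
  -- `η` is chosen so that `r θ η = (θ - r) κ / 2 ≤ (θ - r) (f x₀ - f x)` absorbs the error.
  set η := (θ - r) * κ / (2 * r * θ) with hη_def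
  have hη : 0 < η := div_pos (mul_pos (sub_pos.2 hrθ) hκ) (by positivity)
  have hcone (y : M) : g c - ε * dist c y ≤ g y := by
    linarith [sub_le_mul_dist_of_mem_epsCrit hslope hε.le hc y]
  obtain ⟨N, G, hG, hGg, hGx₀, hGslope⟩ :=
    exists_lipschitzWith_le_globalSlope_le hε.le hcone hg hη
  obtain ⟨x, hx, hxx₀, hxθ⟩ := exists_mem_epsCrit_of_lipschitzWith hf hC hε hθ₀.le hθ₁ hG
    (fun x hx hfin => (hGslope x).trans (hslope x hx hfin)) hx₀
  refine ⟨x, hx, hxx₀, ?_⟩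
  obtain ⟨a, ha⟩ : ∃ a : ℝ, f x = a := ⟨_, (EReal.coe_toReal hx.1 (hbot x)).symm⟩
  have hxw := hx.2 w
  rw [ha₀, ha] at hxx₀ hxθ ⊢
  rw [ha, hb] at hxw
  have hxx₀' : a ≤ a₀ - ε * dist x x₀ := by exact_mod_cast hxx₀
  have hxθ' : a - θ * G x ≤ a₀ - θ * G x₀ := by exact_mod_cast hxθ
  have hxw' : a - ε * dist w x ≤ b := by exact_mod_cast hxw
  suffices r * (g x₀ - g x) ≤ a₀ - a by
    rw [← EReal.coe_sub, ← EReal.coe_sub, EReal.coe_le_coe_iff]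
    linarith
  have hgap : κ ≤ 2 * (a₀ - a) := by
    have := mul_le_mul_of_nonneg_left (dist_triangle w x₀ x) hε.le
    rw [dist_comm x₀ x] at this
    linarith
  have hθu : θ * (g x₀ - g x) ≤ a₀ - a + θ * η := by
    linarith [mul_le_mul_of_nonneg_left (hGg x) hθ₀.le, mul_le_mul_of_nonneg_left hGx₀ hθ₀.le]
  exact mul_le_of_mul_le_add hr₀ hrθ hgap hθu (by rw [hη_def]; field_simp)

end

/-- for `f` proper lsc bounded below on a complete metric space and `g : M → ℝ`
continuous with `|∇̃f| ≥ |∇̃g|` on `dom |∇̃f|`, for each `ε > 0`, `x₀ ∈ M` and `r ∈ (0,1)`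
there is `x ∈ ε-Crit f` with `f(x) ≤ f(x₀) - ε·ρ(x,x₀)` and
`f(x₀) - r·g(x₀) ≥ f(x) - r·g(x)`. -/
theorem exists_epsCrit_r_global_slope {M : Type*} [MetricSpace M] [CompleteSpace M]
    (f : M → EReal) (g : M → ℝ)
    (hproper : ∃ x, f x ≠ ⊤) (hlsc : LowerSemicontinuous f)
    (hbdd : ∃ C : ℝ, ∀ x, (C : EReal) ≤ f x) (hg : Continuous g)
    (hslope : ∀ x, f x ≠ ⊤ → globalSlope f x < ⊤ →
      globalSlope (fun y => (g y : EReal)) x ≤ globalSlope f x) :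
    ∀ ε : ℝ, 0 < ε → ∀ x₀ : M, ∀ r : ℝ, 0 < r → r < 1 →
      ∃ x ∈ epsCrit ε f,
        f x ≤ f x₀ - ↑(ε * dist x x₀) ∧ f x - ↑(r * g x) ≤ f x₀ - ↑(r * g x₀) := by
  intro ε hε x₀ r hr₀ hr₁
  obtain ⟨C, hC⟩ := hbdd
  by_cases hx₀ : f x₀ = ⊤
  · obtain ⟨x₁, hx₁⟩ := hproper
    obtain ⟨x, hx⟩ := exists_mem_epsCrit hlsc hC hε hx₁
    exact ⟨x, hx, by simp only [hx₀, EReal.top_sub_coe, le_top],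
      by simp only [hx₀, EReal.top_sub_coe, le_top]⟩
  by_cases hx₀ε : x₀ ∈ epsCrit ε f
  · exact ⟨x₀, hx₀ε, by simp, le_rfl⟩
  exact exists_mem_epsCrit_of_not_mem_epsCrit hlsc hC hslope hε hg.continuousAt hx₀ hx₀ε hr₀ hr₁
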